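/- arXiv:2604.04260 — 8 statements merged into one kernel-verified Lean document; each statement's English description precedes it below -/
import Mathlib

section
/- Persistence of Destination Sets (PDS): Let {u,v} ∈ E. Suppose that in round j node u receives the message but not from v, i.e. s(j,u) ≠ ∅ and v ∉ s(j,u). Then for every round j' ≥ j, if for every round k with j < k ≤ j' we have both (u,{u,v}) ∉ r(k) (u does not transmit to v in round k) and v ∉ s(k,u) (u does not receive from v in round k), then v ∈ dest(j',u). -/
open scoped Classical

/-- The state of a node in the RDAF protocol: message possession `hasMsg`,
source set `src` and destination set `dst`. -/
structure RDAFState (V : Type*) where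
  hasMsg : Prop
  src : Set V
  dst : Set V

namespace RDAF

variable {V : Type*}

/-- Initial configuration: the source has the message and destination set `N(g0)`. -/
noncomputable def init (G : SimpleGraph V) (g0 : V) : V → RDAFState V := fun u =>
  if u = g0 then ⟨True, ∅, G.neighborSet g0⟩ else ⟨False, ∅, ∅⟩

/-- One round of state evolution: from the states at round `j` to the states at round `j+1`,
under delay function `d` (where `d j v e = true` means transmission from `v` along `e` is
blocked in round `j`). -/
noncomputable def step (G : SimpleGraph V) (d : ℕ → V → Sym2 V → Bool) (j : ℕ)
    (st : V → RDAFState V) : V → RDAFState V := fun u =>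
  let s' : Set V :=
    {v | G.Adj v u ∧ (st v).hasMsg ∧ u ∈ (st v).dst ∧ d (j + 1) v s(v, u) = false}
  let t' : Set V :=
    if s'.Nonempty then G.neighborSet u \ s'
    else if (st u).hasMsg then {v | v ∈ (st u).dst ∧ d (j + 1) u s(u, v) = true}
    else ∅
  ⟨s'.Nonempty ∨ t'.Nonempty, s', t'⟩

/-- The state `S(j, u)` of every node `u` at round `j`. -/
noncomputable def stateAt (G : SimpleGraph V) (g0 : V) (d : ℕ → V → Sym2 V → Bool) :
    ℕ → V → RDAFState V
  | 0 => init G g0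
  | j + 1 => step G d j (stateAt G g0 d j)

/-- `M j u`: node `u` possesses the message at round `j`. -/
noncomputable def M (G : SimpleGraph V) (g0 : V) (d : ℕ → V → Sym2 V → Bool) (j : ℕ)
    (u : V) : Prop :=
  (stateAt G g0 d j u).hasMsg

/-- `srcSet j u = s(j, u)`: the source set of node `u` at round `j`. -/
noncomputable def srcSet (G : SimpleGraph V) (g0 : V) (d : ℕ → V → Sym2 V → Bool) (j : ℕ)
    (u : V) : Set V :=
  (stateAt G g0 d j u).src

/-- `destSet j u = dest(j, u)`: the destination set of node `u` at round `j`. -/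
noncomputable def destSet (G : SimpleGraph V) (g0 : V) (d : ℕ → V → Sym2 V → Bool) (j : ℕ)
    (u : V) : Set V :=
  (stateAt G g0 d j u).dst

/-- The transmission set `r(j)`: pairs `(v, {v,w})` such that `v` transmits to `w` in round `j`. -/
noncomputable def trans (G : SimpleGraph V) (g0 : V) (d : ℕ → V → Sym2 V → Bool) :
    ℕ → Set (V × Sym2 V)
  | 0 => ∅
  | j + 1 =>
    {p | ∃ v w : V, p = (v, s(v, w)) ∧ G.Adj v w ∧ M G g0 d j v ∧
      w ∈ destSet G g0 d j v ∧ d (j + 1) v s(v, w) = false}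

/-- The configuration `σ(j) = (S(j, ·), r(j))` at round `j`. -/
noncomputable def config (G : SimpleGraph V) (g0 : V) (d : ℕ → V → Sym2 V → Bool) (j : ℕ) :
    (V → RDAFState V) × Set (V × Sym2 V) :=
  (stateAt G g0 d j, trans G g0 d j)

/-- The finite delay property: every node-edge pair is allowed to transmit infinitely often. -/
def FiniteDelay (G : SimpleGraph V) (d : ℕ → V → Sym2 V → Bool) : Prop :=
  ∀ v : V, ∀ e ∈ G.edgeSet, v ∈ e → ∀ j : ℕ, ∃ j' ≥ j, d j' v e = false

/-- Flooding has terminated by round `t`: no node has the message at round `t`. -/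
def TerminatedBy (G : SimpleGraph V) (g0 : V) (d : ℕ → V → Sym2 V → Bool) (t : ℕ) : Prop :=
  ∀ v : V, ¬ M G g0 d t v

/-- Flooding terminates: it has terminated by some round. -/
def Terminates (G : SimpleGraph V) (g0 : V) (d : ℕ → V → Sym2 V → Bool) : Prop :=
  ∃ t : ℕ, TerminatedBy G g0 d t

/-- A schedule is periodic infinite with parameters `(c, l)`. -/
def PeriodicInfinite (G : SimpleGraph V) (g0 : V) (d : ℕ → V → Sym2 V → Bool)
    (c l : ℕ) : Prop :=
  1 ≤ l ∧ (∀ j : ℕ, c ≤ j → config G g0 d j = config G g0 d (j + l)) ∧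
    ∃ k < l, (trans G g0 d (c + k)).Nonempty

end RDAF


namespace RDAF

variable {V : Type*}

lemma srcSet_succ (G : SimpleGraph V) (g0 : V) (d : ℕ → V → Sym2 V → Bool) (j : ℕ) (u : V) :
    srcSet G g0 d (j + 1) u =
      {v | G.Adj v u ∧ M G g0 d j v ∧ u ∈ destSet G g0 d j v ∧ d (j + 1) v s(v, u) = false} :=
  rfl

lemma destSet_succ (G : SimpleGraph V) (g0 : V) (d : ℕ → V → Sym2 V → Bool) (j : ℕ) (u : V) :
    destSet G g0 d (j + 1) u =
      if (srcSet G g0 d (j + 1) u).Nonempty then G.neighborSet u \ srcSet G g0 d (j + 1) u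
      else if M G g0 d j u then {v | v ∈ destSet G g0 d j u ∧ d (j + 1) u s(u, v) = true}
      else ∅ :=
  rfl

lemma M_of_destSet (G : SimpleGraph V) (g0 : V) (d : ℕ → V → Sym2 V → Bool) (j : ℕ) (u : V)
    (h : (destSet G g0 d j u).Nonempty) : M G g0 d j u := by
  cases j with
  | zero =>
    by_cases hu : u = g0
    · simp [M, stateAt, init, hu]
    · exfalso
      rcases h with ⟨w, hw⟩
      simp [destSet, stateAt, init, hu] at hw
  | succ m => exact Or.inr h

end RDAF

/-- **Persistence of Destination Sets (PDS).** Let `{u,v} ∈ E`. Suppose that in round `j`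
node `u` receives the message but not from `v`. Then for every round `j' ≥ j`, if in every
round `k` with `j < k ≤ j'` node `u` neither transmits to `v` nor receives from `v`,
then `v ∈ dest(j', u)`. -/
theorem RDAF.persistence_of_destination_sets
    {V : Type*} (G : SimpleGraph V) (g0 : V) (d : ℕ → V → Sym2 V → Bool)
    (u v : V) (hadj : G.Adj u v) (j j' : ℕ) (hjj' : j ≤ j')
    (hrecv : (RDAF.srcSet G g0 d j u).Nonempty)
    (hnotv : v ∉ RDAF.srcSet G g0 d j u)
    (hquiet : ∀ k : ℕ, j < k → k ≤ j' →
      (u, s(u, v)) ∉ RDAF.trans G g0 d k ∧ v ∉ RDAF.srcSet G g0 d k u) :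
    v ∈ RDAF.destSet G g0 d j' u := by
  -- first, `j ≥ 1`
  obtain ⟨m, rfl⟩ : ∃ m, j = m + 1 := by
    cases j with
    | zero =>
      exfalso
      rcases hrecv with ⟨w, hw⟩
      simp only [RDAF.srcSet, RDAF.stateAt, RDAF.init] at hw
      split at hw <;> simp at hw
    | succ m => exact ⟨m, rfl⟩
  revert hquiet
  induction j', hjj' using Nat.le_induction with
  | base =>
    intro _
    rw [RDAF.destSet_succ, if_pos hrecv]
    exact ⟨hadj, hnotv⟩
  | succ n hn ih =>
    intro hq
    have hd : v ∈ RDAF.destSet G g0 d n u :=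
      ih (fun k hk1 hk2 => hq k hk1 (Nat.le_succ_of_le hk2))
    have hq' := hq (n + 1) (Nat.lt_succ_of_le hn) le_rfl
    by_cases hs : (RDAF.srcSet G g0 d (n + 1) u).Nonempty
    · rw [RDAF.destSet_succ, if_pos hs]
      exact ⟨hadj, hq'.2⟩
    · have hM : RDAF.M G g0 d n u := RDAF.M_of_destSet G g0 d n u ⟨v, hd⟩
      have hdt : d (n + 1) u s(u, v) = true := by
        by_contra hf
        exact hq'.1 ⟨u, v, rfl, hadj, hM, hd, Bool.not_eq_true _ ▸ hf⟩
      rw [RDAF.destSet_succ, if_neg hs, if_pos hM]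
      exact ⟨hd, hdt⟩
end

section
/- Empty destination sets and termination: assume the delay function d satisfies the finite delay property. Then for every round t, dest(t,v) = ∅ for every v ∈ V if and only if flooding has terminated by round t+1, i.e. M(t+1,v) = 0 for every v ∈ V. In particular, flooding terminates if and only if there exists a round t at which all destination sets are empty. -/
open scoped Classical

namespace RDAF

variable {V : Type*} (G : SimpleGraph V) (g0 : V) (d : ℕ → V → Sym2 V → Bool)

lemma destSet_subset_nbr : ∀ (j : ℕ) (u : V),
    destSet G g0 d j u ⊆ G.neighborSet u := by
  intro j
  induction j with
  | zero =>
    intro u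
    simp only [destSet, stateAt, init]
    split <;> rename_i h
    · subst h; exact fun x hx => hx
    · exact fun x hx => hx.elim
  | succ j ih =>
    intro u x hx
    simp only [destSet, stateAt, step] at hx
    split at hx
    · exact hx.1
    · split at hx
      · exact ih u hx.1
      · exact hx.elim

lemma M_of_mem_destSet {j : ℕ} {v w : V} (h : w ∈ destSet G g0 d j v) :
    M G g0 d j v := by
  cases j with
  | zero =>
    simp only [destSet, stateAt, init] at h
    simp only [M, stateAt, init]
    split at h <;> rename_i hv
    · simp [hv]
    · exact h.elim
  | succ j =>
    simp only [destSet, stateAt, step] at h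
    simp only [M, stateAt, step]
    exact Or.inr ⟨w, h⟩

lemma destSet_eq_empty_of_not_M {j : ℕ} {v : V} (h : ¬ M G g0 d j v) :
    destSet G g0 d j v = ∅ := by
  by_contra hne
  exact h (M_of_mem_destSet G g0 d (Set.nonempty_iff_ne_empty.2 hne).choose_spec)

end RDAF

/-- **Empty destination sets and termination.** Assuming the finite delay property, for every
round `t` all destination sets are empty at round `t` if and only if flooding has terminated by
round `t+1`; in particular, flooding terminates if and only if there is a round at which all
destination sets are empty. -/
theorem RDAF.empty_destination_sets_iff_termination
    {V : Type*} (G : SimpleGraph V) (g0 : V) (d : ℕ → V → Sym2 V → Bool)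
    (hfd : RDAF.FiniteDelay G d) :
    (∀ t : ℕ, (∀ v : V, RDAF.destSet G g0 d t v = ∅) ↔ RDAF.TerminatedBy G g0 d (t + 1)) ∧
    (RDAF.Terminates G g0 d ↔ ∃ t : ℕ, ∀ v : V, RDAF.destSet G g0 d t v = ∅) := by
  have main : ∀ t : ℕ, (∀ v : V, RDAF.destSet G g0 d t v = ∅) ↔
      RDAF.TerminatedBy G g0 d (t + 1) := by
    intro t
    constructor
    · -- forward: all dests empty at t → no message at t+1
      intro h u hM
      simp only [RDAF.M, RDAF.stateAt, RDAF.step] at hM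
      rcases hM with ⟨v, _, _, hvd, _⟩ | hM
      · rw [show (RDAF.stateAt G g0 d t v).dst = RDAF.destSet G g0 d t v from rfl,
          h v] at hvd
        exact hvd
      · split at hM
        · rename_i hs
          obtain ⟨v, _, _, hvd, _⟩ := hs
          rw [show (RDAF.stateAt G g0 d t v).dst = RDAF.destSet G g0 d t v from rfl,
            h v] at hvd
          exact hvd
        · split at hM
          · obtain ⟨v, hvd, _⟩ := hM
            rw [show (RDAF.stateAt G g0 d t u).dst = RDAF.destSet G g0 d t u from rfl,
              h u] at hvd
            exact hvd
          · obtain ⟨x, hx⟩ := hM; exact hx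
    · -- backward: terminated at t+1 → all dests empty at t
      intro h v
      by_contra hne
      obtain ⟨w, hw⟩ := Set.nonempty_iff_ne_empty.2 hne
      have hMv : RDAF.M G g0 d t v := RDAF.M_of_mem_destSet G g0 d hw
      have hadj : G.Adj v w := RDAF.destSet_subset_nbr G g0 d t v hw
      cases hd : d (t + 1) v s(v, w) with
      | true =>
        apply h v
        simp only [RDAF.M, RDAF.stateAt, RDAF.step]
        by_cases hs : ({x | G.Adj x v ∧ (RDAF.stateAt G g0 d t x).hasMsg ∧
            v ∈ (RDAF.stateAt G g0 d t x).dst ∧ d (t + 1) x s(x, v) = false} :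
            Set V).Nonempty
        · exact Or.inl hs
        · refine Or.inr ?_
          rw [if_neg hs, if_pos (show (RDAF.stateAt G g0 d t v).hasMsg from hMv)]
          exact ⟨w, hw, hd⟩
      | false =>
        apply h w
        simp only [RDAF.M, RDAF.stateAt, RDAF.step]
        exact Or.inl ⟨v, hadj, hMv, hw, hd⟩
  refine ⟨main, ?_, ?_⟩
  · rintro ⟨t, ht⟩
    refine ⟨t, fun v => RDAF.destSet_eq_empty_of_not_M G g0 d (ht v)⟩
  · rintro ⟨t, ht⟩
    exact ⟨t + 1, (main t).1 ht⟩
end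

section
/- Non-disruption of the cyclic pattern (Lemma 4): under the cycle setup assumptions, if the delay function d satisfies the weak cyclic delay hypothesis, then: (a) every transmission along a cycle edge e_k (in either direction) can occur only in rounds j with j − c ≡ k (mod n); and (b) the disruption condition never occurs, i.e. there are no k ∈ {1,…,n} and round j such that, writing b = (k mod n)+1, (v_b, e_k) ∈ r(j), M(j−1, v_k) = 1, and (v_k, e_k) ∉ r(j') for every j' ≤ j. Hence the cyclic propagation pattern cannot be disrupted by message flow in the reverse direction along the cycle. -/
open scoped Classical

namespace RDAF

variable {V : Type*}

/-- The `i`-th edge of the cycle: `e_i = {v_i, v_{(i mod n)+1}}`. -/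
def cycEdge (v : ℕ → V) (n : ℕ) (i : ℕ) : Sym2 V := s(v i, v (i % n + 1))

/-- The cyclic propagation pattern holds for the cycle `v_1, …, v_n` starting from round `c`:
for every `i ≥ 1`, writing `a = ((i-1) mod n) + 1`, node `v_a` transmits along `e_a`
in round `c + i`. -/
def CyclicPattern (G : SimpleGraph V) (g0 : V) (d : ℕ → V → Sym2 V → Bool)
    (n : ℕ) (v : ℕ → V) (c : ℕ) : Prop :=
  ∀ i : ℕ, 1 ≤ i →
    (v ((i - 1) % n + 1), cycEdge v n ((i - 1) % n + 1)) ∈ RDAF.trans G g0 d (c + i)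

/-- The disruption condition: for some `k ∈ {1,…,n}` and some round `j`, writing
`b = (k mod n) + 1`, node `v_b` transmits to `v_k` along `e_k` in round `j`, node `v_k`
possesses the message before that round, and `v_k` has not transmitted to `v_b` by round `j`. -/
def Disruption (G : SimpleGraph V) (g0 : V) (d : ℕ → V → Sym2 V → Bool)
    (n : ℕ) (v : ℕ → V) (c : ℕ) : Prop :=
  ∃ k ∈ Finset.Icc 1 n, ∃ j : ℕ,
    (v (k % n + 1), cycEdge v n k) ∈ RDAF.trans G g0 d j ∧
    RDAF.M G g0 d (j - 1) (v k) ∧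
    ∀ j' ≤ j, (v k, cycEdge v n k) ∉ RDAF.trans G g0 d j'

end RDAF

namespace RDAF

variable {V : Type*} {G : SimpleGraph V} {g0 : V} {d : ℕ → V → Sym2 V → Bool}

lemma aux_srcSet_succ (j : ℕ) (u : V) :
    srcSet G g0 d (j + 1) u =
      {x | G.Adj x u ∧ M G g0 d j x ∧ u ∈ destSet G g0 d j x ∧ d (j + 1) x s(x, u) = false} :=
  rfl

lemma aux_destSet_succ (j : ℕ) (u : V) :
    destSet G g0 d (j + 1) u =
      if (srcSet G g0 d (j + 1) u).Nonempty then
        G.neighborSet u \ srcSet G g0 d (j + 1) u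
      else if M G g0 d j u then {x | x ∈ destSet G g0 d j u ∧ d (j + 1) u s(u, x) = true}
      else ∅ :=
  rfl

lemma aux_M_succ (j : ℕ) (u : V) :
    M G g0 d (j + 1) u ↔
      (srcSet G g0 d (j + 1) u).Nonempty ∨ (destSet G g0 d (j + 1) u).Nonempty :=
  Iff.rfl

lemma aux_mem_trans_succ (j : ℕ) (p : V × Sym2 V) :
    p ∈ trans G g0 d (j + 1) ↔ ∃ a b : V, p = (a, s(a, b)) ∧ G.Adj a b ∧ M G g0 d j a ∧
      b ∈ destSet G g0 d j a ∧ d (j + 1) a s(a, b) = false :=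
  Iff.rfl

lemma aux_srcSet_zero (u : V) : srcSet G g0 d 0 u = ∅ := by
  by_cases h : u = g0 <;> simp [srcSet, stateAt, init, h]

lemma aux_M_of_src {j : ℕ} {u : V} (h : (srcSet G g0 d j u).Nonempty) : M G g0 d j u := by
  cases j with
  | zero => rw [aux_srcSet_zero] at h; exact absurd h (by simp)
  | succ m => exact Or.inl h

/-- A cycle node different from the source which receives nothing before round `c`
is quiescent before round `c`. -/
lemma aux_quiet {u : V} (hg : u ≠ g0) {c : ℕ} (hs : ∀ t < c, srcSet G g0 d t u = ∅) :
    ∀ t < c, ¬ M G g0 d t u ∧ destSet G g0 d t u = ∅ := by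
  intro t
  induction t with
  | zero =>
      intro _
      constructor
      · simp [M, stateAt, init, hg]
      · simp [destSet, stateAt, init, hg]
  | succ m ih =>
      intro hmc
      have hm : m < c := Nat.lt_of_succ_lt hmc
      obtain ⟨hM, _⟩ := ih hm
      have hsrc : srcSet G g0 d (m + 1) u = ∅ := hs _ hmc
      have hdst : destSet G g0 d (m + 1) u = ∅ := by
        rw [aux_destSet_succ, hsrc]
        simp [hM]
      refine ⟨?_, hdst⟩
      rw [aux_M_succ, hsrc, hdst]
      simp

end RDAF

/-- **Non-disruption of the cyclic pattern (Lemma 4).** Under the cycle setup assumptions and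
the weak cyclic delay hypothesis: (a) every transmission along a cycle edge `e_k` (in either
direction) occurs only in rounds `j` with `j - c ≡ k (mod n)`; and (b) the disruption condition
never occurs, so the cyclic pattern cannot be disrupted by reverse message flow. -/
theorem RDAF.cyclic_pattern_non_disruption
    {V : Type*} (G : SimpleGraph V) (g0 : V) (d : ℕ → V → Sym2 V → Bool)
    (n : ℕ) (v : ℕ → V) (c : ℕ)
    (hn : 3 ≤ n)
    (hdistinct : ∀ i ∈ Finset.Icc 1 n, ∀ k ∈ Finset.Icc 1 n, v i = v k → i = k)
    (hadj : ∀ i ∈ Finset.Icc 1 n, G.Adj (v i) (v (i % n + 1)))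
    (hsilent : ∀ i ∈ Finset.Icc 1 n, ∀ j < c, RDAF.srcSet G g0 d j (v i) = ∅)
    (hrecv : (RDAF.srcSet G g0 d c (v 1)).Nonempty)
    (hnotv2 : v 2 ∉ RDAF.srcSet G g0 d c (v 1))
    (hweak : ∀ j : ℕ, ∀ i ∈ Finset.Icc 1 n, ∀ u ∈ RDAF.cycEdge v n i,
      (d j u (RDAF.cycEdge v n i) = false ↔ (j : ℤ) ≡ (c : ℤ) + (i : ℤ) [ZMOD (n : ℤ)])) :
    (∀ j : ℕ, ∀ k ∈ Finset.Icc 1 n, ∀ u : V,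
        (u, RDAF.cycEdge v n k) ∈ RDAF.trans G g0 d j →
        (j : ℤ) ≡ (c : ℤ) + (k : ℤ) [ZMOD (n : ℤ)]) ∧
    ¬ RDAF.Disruption G g0 d n v c := by
  have hn0 : 0 < n := by omega
  -- basic mod-cast congruence
  have hmodcast : ∀ m : ℕ, ((m % n : ℕ) : ℤ) ≡ (m : ℤ) [ZMOD (n : ℤ)] := by
    intro m
    have h1 : ((m % n : ℕ) : ℤ) = (m : ℤ) % (n : ℤ) := by push_cast; ring
    rw [h1]
    exact Int.emod_emod_of_dvd _ dvd_rfl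
  have hcast : ∀ t : ℕ, ((t % n + 1 : ℕ) : ℤ) ≡ (t : ℤ) + 1 [ZMOD (n : ℤ)] := by
    intro t
    have h := (hmodcast t).add_right 1
    calc ((t % n + 1 : ℕ) : ℤ) = ((t % n : ℕ) : ℤ) + 1 := by push_cast; ring
      _ ≡ (t : ℤ) + 1 [ZMOD (n : ℤ)] := h
  have hnd1 : ∀ x : ℤ, x ≡ x + 1 [ZMOD (n : ℤ)] → False := by
    intro x h
    have h2 : (n : ℤ) ∣ 1 := by simpa using h.dvd
    have h3 := Int.le_of_dvd one_pos h2
    omega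
  -- membership of indices
  have hicc : ∀ m : ℕ, m % n + 1 ∈ Finset.Icc 1 n := by
    intro m
    have := Nat.mod_lt m hn0
    simp only [Finset.mem_Icc]
    omega
  -- part (a)
  have parta : ∀ j : ℕ, ∀ k ∈ Finset.Icc 1 n, ∀ u : V,
      (u, RDAF.cycEdge v n k) ∈ RDAF.trans G g0 d j →
      (j : ℤ) ≡ (c : ℤ) + (k : ℤ) [ZMOD (n : ℤ)] := by
    intro j k hk u hu
    cases j with
    | zero => exact absurd hu (by simp [RDAF.trans])
    | succ m =>
        obtain ⟨a, b, hpe, -, -, -, hd'⟩ := (RDAF.aux_mem_trans_succ m _).mp hu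
        have h1 : u = a := congrArg Prod.fst hpe
        have h2 : RDAF.cycEdge v n k = s(a, b) := congrArg Prod.snd hpe
        subst h1
        have humem : u ∈ RDAF.cycEdge v n k := by
          rw [h2]; exact Sym2.mem_mk_left _ _
        exact (hweak (m + 1) k hk u humem).mp (by rw [h2]; exact hd')
  refine ⟨parta, ?_⟩
  -- c ≥ 1
  have hc1 : 1 ≤ c := by
    by_contra h
    have hc0 : c = 0 := by omega
    rw [hc0, RDAF.aux_srcSet_zero] at hrecv
    exact absurd hrecv (by simp)
  obtain ⟨c', rfl⟩ : ∃ c', c = c' + 1 := ⟨c - 1, by omega⟩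
  set c : ℕ := c' + 1 with hc
  -- the cyclic propagation pattern (Lemma 3), in shifted form
  have key : ∀ m : ℕ,
      (v (m % n + 1), RDAF.cycEdge v n (m % n + 1)) ∈ RDAF.trans G g0 d (c + m + 1) := by
    intro m
    induction m with
    | zero =>
        have h1n : (1 : ℕ) % n = 1 := Nat.mod_eq_of_lt (by omega)
        have h0n : (0 : ℕ) % n = 0 := Nat.zero_mod n
        have h1icc : (1 : ℕ) ∈ Finset.Icc 1 n := by simp only [Finset.mem_Icc]; omega
        have hadj12 : G.Adj (v 1) (v 2) := by
          have := hadj 1 h1icc; rwa [h1n] at this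
        have he1 : RDAF.cycEdge v n 1 = s(v 1, v 2) := by
          unfold RDAF.cycEdge; rw [h1n]
        rw [h0n]
        refine (RDAF.aux_mem_trans_succ (c + 0) _).mpr
          ⟨v 1, v 2, by rw [he1], hadj12, RDAF.aux_M_of_src (by simpa using hrecv), ?_, ?_⟩
        · -- v 2 ∈ destSet c (v 1)
          show v 2 ∈ RDAF.destSet G g0 d (c' + 1) (v 1)
          rw [RDAF.aux_destSet_succ]
          rw [if_pos (show (RDAF.srcSet G g0 d (c' + 1) (v 1)).Nonempty from hrecv)]
          exact ⟨(G.mem_neighborSet _ _).mpr hadj12, hnotv2⟩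
        · -- delay is off
          rw [← he1]
          refine (hweak (c + 0 + 1) 1 h1icc (v 1) (by rw [he1]; exact Sym2.mem_mk_left _ _)).mpr ?_
          push_cast
          exact Int.ModEq.refl _
    | succ m ih =>
        set a : ℕ := m % n + 1 with ha
        set b : ℕ := (m + 1) % n + 1 with hb
        have haicc := hicc m
        have hbicc := hicc (m + 1)
        have hab : a % n + 1 = b := by
          have : (m + 1) % n = (m % n + 1) % n := by
            conv_lhs => rw [Nat.add_mod]
            rw [Nat.mod_eq_of_lt (show 1 < n by omega)]
          rw [hb, this]
        have hea : RDAF.cycEdge v n a = s(v a, v b) := by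
          unfold RDAF.cycEdge; rw [hab]
        have hadjab : G.Adj (v a) (v b) := by
          have := hadj a haicc; rwa [hab] at this
        -- unfold the inductive transmission
        obtain ⟨x, y, hpe, -, hMx, hdy, hdx⟩ := (RDAF.aux_mem_trans_succ (c + m) _).mp ih
        have hx : v a = x := congrArg Prod.fst hpe
        have hxy : RDAF.cycEdge v n a = s(x, y) := congrArg Prod.snd hpe
        subst hx
        have hy : y = v b := by
          rw [hea] at hxy
          exact (Sym2.congr_right.mp hxy.symm)
        subst hy
        -- v a is a source of v b at round c + m + 1
        have hsrc : v a ∈ RDAF.srcSet G g0 d (c + m + 1) (v b) := by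
          rw [RDAF.aux_srcSet_succ]
          exact ⟨hadjab, hMx, hdy, hdx⟩
        have hsne : (RDAF.srcSet G g0 d (c + m + 1) (v b)).Nonempty := ⟨_, hsrc⟩
        have hMb : RDAF.M G g0 d (c + m + 1) (v b) := RDAF.aux_M_of_src hsne
        -- congruences
        have hca : ((c + m + 1 : ℕ) : ℤ) ≡ (c : ℤ) + (a : ℤ) [ZMOD (n : ℤ)] := by
          have := hweak (c + m + 1) a haicc (v a) (by rw [hea]; exact Sym2.mem_mk_left _ _)
          exact this.mp (by rw [hea]; exact hdx)
        -- b_2 := b % n + 1 is in the destination set of v b at round c + m + 1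
        have hadjb : G.Adj (v b) (v (b % n + 1)) := hadj b hbicc
        have hdstb : v (b % n + 1) ∈ RDAF.destSet G g0 d (c + m + 1) (v b) := by
          rw [RDAF.aux_destSet_succ, if_pos hsne]
          refine ⟨hadjb, ?_⟩
          intro hmem
          rw [RDAF.aux_srcSet_succ] at hmem
          obtain ⟨-, -, -, hdmem⟩ := hmem
          have hedge : s(v (b % n + 1), v b) = RDAF.cycEdge v n b := by
            unfold RDAF.cycEdge; rw [Sym2.eq_swap]
          rw [hedge] at hdmem
          have hcb : ((c + m + 1 : ℕ) : ℤ) ≡ (c : ℤ) + (b : ℤ) [ZMOD (n : ℤ)] :=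
            (hweak (c + m + 1) b hbicc _ (by
              unfold RDAF.cycEdge; exact Sym2.mem_mk_right _ _)).mp hdmem
          -- derive n ∣ 1
          have hai : ((a : ℕ) : ℤ) ≡ (m : ℤ) + 1 [ZMOD (n : ℤ)] := by
            rw [ha]; exact hcast m
          have hbi : ((b : ℕ) : ℤ) ≡ (m : ℤ) + 2 [ZMOD (n : ℤ)] := by
            rw [hb]
            have := hcast (m + 1)
            have hc2 : ((m + 1 : ℕ) : ℤ) + 1 = (m : ℤ) + 2 := by push_cast; ring
            rwa [hc2] at this
          have hfin : ((c : ℤ) + ((m : ℤ) + 1)) ≡ (c : ℤ) + ((m : ℤ) + 1) + 1 [ZMOD (n : ℤ)] := by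
            calc ((c : ℤ) + ((m : ℤ) + 1)) ≡ (c : ℤ) + (a : ℤ) [ZMOD (n : ℤ)] :=
                  (Int.ModEq.add_left _ hai).symm
              _ ≡ ((c + m + 1 : ℕ) : ℤ) [ZMOD (n : ℤ)] := hca.symm
              _ ≡ (c : ℤ) + (b : ℤ) [ZMOD (n : ℤ)] := hcb
              _ ≡ (c : ℤ) + ((m : ℤ) + 2) [ZMOD (n : ℤ)] := Int.ModEq.add_left _ hbi
              _ = (c : ℤ) + ((m : ℤ) + 1) + 1 := by ring
          exact hnd1 _ hfin
        -- assemble the transmission at round c + (m+1) + 1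
        refine (RDAF.aux_mem_trans_succ (c + (m + 1)) _).mpr
          ⟨v b, v (b % n + 1), rfl, hadjb, ?_, ?_, ?_⟩
        · show RDAF.M G g0 d (c + m + 1) (v b)
          exact hMb
        · show v (b % n + 1) ∈ RDAF.destSet G g0 d (c + m + 1) (v b)
          exact hdstb
        · refine (hweak (c + (m + 1) + 1) b hbicc (v b) (by
            unfold RDAF.cycEdge; exact Sym2.mem_mk_left _ _)).mpr ?_
          have hbi : ((b : ℕ) : ℤ) ≡ (m : ℤ) + 2 [ZMOD (n : ℤ)] := by
            rw [hb]
            have := hcast (m + 1)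
            have hc2 : ((m + 1 : ℕ) : ℤ) + 1 = (m : ℤ) + 2 := by push_cast; ring
            rwa [hc2] at this
          calc ((c + (m + 1) + 1 : ℕ) : ℤ) = (c : ℤ) + ((m : ℤ) + 2) := by push_cast; ring
            _ ≡ (c : ℤ) + (b : ℤ) [ZMOD (n : ℤ)] := (Int.ModEq.add_left _ hbi).symm
  -- part (b): no disruption
  rintro ⟨k, hk, j, hrev, hMk, hnever⟩
  simp only [Finset.mem_Icc] at hk
  have hkicc : k ∈ Finset.Icc 1 n := by simp only [Finset.mem_Icc]; omega
  have hbicc := hicc k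
  have hkb : k ≠ k % n + 1 := by
    rcases Nat.lt_or_ge k n with h | h
    · rw [Nat.mod_eq_of_lt h]; omega
    · have hkn : k = n := by omega
      rw [hkn, Nat.mod_self]; omega
  have hcong := parta j k hkicc _ hrev
  cases j with
  | zero => exact absurd hrev (by simp [RDAF.trans])
  | succ m =>
      by_cases hjc : m + 1 ≤ c
      · -- round before (or at) c: no cycle node other than g0 can be active
        obtain ⟨x, y, hpe, -, hMx, -, -⟩ := (RDAF.aux_mem_trans_succ m _).mp hrev
        have hx : v (k % n + 1) = x := congrArg Prod.fst hpe
        subst hx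
        by_cases hbg : v (k % n + 1) = g0
        · -- then v k ≠ g0 and v k cannot have the message at round m < c
          have hvk : v k ≠ g0 := by
            intro h
            exact hkb (hdistinct k hkicc (k % n + 1) hbicc (h.trans hbg.symm))
          have hq := RDAF.aux_quiet hvk (fun t ht => hsilent k hkicc t ht) m (by omega)
          simp only [Nat.add_sub_cancel] at hMk
          exact hq.1 hMk
        · have hq := RDAF.aux_quiet hbg
            (fun t ht => hsilent (k % n + 1) hbicc t ht) m (by omega)
          exact hq.1 hMx
      · -- round after c: v k itself transmits along e_k in round j, contradiction
        set j : ℕ := m + 1 with hj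
        have hci : c < j := by omega
        obtain ⟨i, hji⟩ : ∃ i, j = c + (i + 1) := ⟨j - c - 1, by omega⟩
        -- from the congruence, (i) % n = k - 1... compute (c + i + 1) ≡ c + k
        have hik : (i + 1) % n = k % n := by
          have h1 : ((i + 1 : ℕ) : ℤ) ≡ (k : ℤ) [ZMOD (n : ℤ)] := by
            have h2 : ((c : ℕ) : ℤ) + ((i + 1 : ℕ) : ℤ) ≡ ((c : ℕ) : ℤ) + (k : ℤ)
                [ZMOD (n : ℤ)] := by
              have h3 : ((j : ℕ) : ℤ) = ((c : ℕ) : ℤ) + ((i + 1 : ℕ) : ℤ) := by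
                rw [hji]; push_cast; ring
              exact h3 ▸ hcong
            exact Int.ModEq.add_left_cancel' _ h2
          have h4 : ((i + 1 : ℕ) : ℤ) % (n : ℤ) = ((k : ℕ) : ℤ) % (n : ℤ) := h1
          have h5 : (((i + 1) % n : ℕ) : ℤ) = ((k % n : ℕ) : ℤ) := by
            push_cast
            exact h4
          exact_mod_cast h5
        have hmk : i % n = k - 1 := by
          rcases Nat.lt_or_ge k n with h | h
          · -- k % n = k
            rw [Nat.mod_eq_of_lt h] at hik
            obtain ⟨q, hq⟩ : ∃ q, i + 1 = n * q + k :=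
              ⟨(i + 1) / n, by conv_lhs => rw [← Nat.div_add_mod (i + 1) n, hik]⟩
            have hi' : i = n * q + (k - 1) := by omega
            rw [hi', Nat.mul_add_mod]
            exact Nat.mod_eq_of_lt (by omega)
          · have hkn : k = n := by omega
            rw [hkn, Nat.mod_self] at hik
            obtain ⟨q, hq⟩ : ∃ q, i + 1 = n * q := Nat.dvd_of_mod_eq_zero hik
            have hq1 : 1 ≤ q := by
              rcases Nat.eq_zero_or_pos q with h0 | h0
              · rw [h0, Nat.mul_zero] at hq; omega
              · exact h0
            have hi' : i = n * (q - 1) + (n - 1) := by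
              have h6 : n * q = n * (q - 1) + n := by
                conv_lhs => rw [show q = (q - 1) + 1 by omega]
                rw [Nat.mul_succ]
              omega
            rw [hi', Nat.mul_add_mod, hkn]
            exact Nat.mod_eq_of_lt (by omega)
        have hkey := key i
        rw [hmk] at hkey
        have hk1 : k - 1 + 1 = k := by omega
        rw [hk1] at hkey
        have hrnd : c + i + 1 = j := by omega
        rw [hrnd] at hkey
        exact hnever j le_rfl hkey
end

section
/- External message preservation (Lemma 5): under the cycle setup assumptions, if the delay function d satisfies the weak cyclic delay hypothesis (so that d is unconstrained on edges not belonging to C, and in particular nodes outside the cycle may transmit the message to cycle vertices), then the cyclic propagation pattern still holds: for every i ≥ 1, writing a = ((i−1) mod n)+1 and b = (i mod n)+1, we have (v_a, e_a) ∈ r(c+i). That is, receiving messages from nodes outside the cycle does not disrupt cyclic propagation. -/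
open scoped Classical

namespace RDAF

variable {V : Type*}

lemma mem_srcSet_succ_iff (G : SimpleGraph V) (g0 : V) (d : ℕ → V → Sym2 V → Bool)
    (j : ℕ) (u x : V) :
    x ∈ srcSet G g0 d (j + 1) u ↔
      G.Adj x u ∧ M G g0 d j x ∧ u ∈ destSet G g0 d j x ∧ d (j + 1) x s(x, u) = false :=
  Iff.rfl

lemma M_of_src (G : SimpleGraph V) (g0 : V) (d : ℕ → V → Sym2 V → Bool)
    {j : ℕ} {u : V} (h : (srcSet G g0 d (j + 1) u).Nonempty) : M G g0 d (j + 1) u :=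
  Or.inl h

lemma destSet_of_src (G : SimpleGraph V) (g0 : V) (d : ℕ → V → Sym2 V → Bool)
    {j : ℕ} {u : V} (h : (srcSet G g0 d (j + 1) u).Nonempty) :
    destSet G g0 d (j + 1) u = G.neighborSet u \ srcSet G g0 d (j + 1) u := by
  show (step G d j (stateAt G g0 d j) u).dst = _
  simp only [step]
  split
  · rfl
  · next hns => exact absurd h hns

lemma mem_trans_succ_iff (G : SimpleGraph V) (g0 : V) (d : ℕ → V → Sym2 V → Bool)
    (j : ℕ) (p : V × Sym2 V) :
    p ∈ trans G g0 d (j + 1) ↔ ∃ x w : V, p = (x, s(x, w)) ∧ G.Adj x w ∧ M G g0 d j x ∧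
      w ∈ destSet G g0 d j x ∧ d (j + 1) x s(x, w) = false :=
  Iff.rfl

lemma modeq_mod (n b : ℤ) : b % n ≡ b [ZMOD n] :=
  Int.emod_emod_of_dvd b dvd_rfl

end RDAF

/-- **External message preservation (Lemma 5).** Under the cycle setup assumptions, if the
delay function satisfies only the weak cyclic delay hypothesis (so edges not on the cycle are
unconstrained, and nodes outside the cycle may transmit to cycle vertices), the cyclic
propagation pattern still holds: receiving messages from outside the cycle does not disrupt
cyclic propagation. -/
theorem RDAF.external_message_preservation
    {V : Type*} (G : SimpleGraph V) (g0 : V) (d : ℕ → V → Sym2 V → Bool)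
    (n : ℕ) (v : ℕ → V) (c : ℕ)
    (hn : 3 ≤ n)
    (hdistinct : ∀ i ∈ Finset.Icc 1 n, ∀ k ∈ Finset.Icc 1 n, v i = v k → i = k)
    (hadj : ∀ i ∈ Finset.Icc 1 n, G.Adj (v i) (v (i % n + 1)))
    (hsilent : ∀ i ∈ Finset.Icc 1 n, ∀ j < c, RDAF.srcSet G g0 d j (v i) = ∅)
    (hrecv : (RDAF.srcSet G g0 d c (v 1)).Nonempty)
    (hnotv2 : v 2 ∉ RDAF.srcSet G g0 d c (v 1))
    (hweak : ∀ j : ℕ, ∀ i ∈ Finset.Icc 1 n, ∀ u ∈ RDAF.cycEdge v n i,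
      (d j u (RDAF.cycEdge v n i) = false ↔ (j : ℤ) ≡ (c : ℤ) + (i : ℤ) [ZMOD (n : ℤ)])) :
    RDAF.CyclicPattern G g0 d n v c := by
  have hn0 : 0 < n := by omega
  -- c ≥ 1
  obtain ⟨c₀, rfl⟩ : ∃ c₀, c = c₀ + 1 := by
    cases c with
    | zero =>
      exfalso
      obtain ⟨x, hx⟩ := hrecv
      by_cases h : v 1 = g0 <;>
        simp [RDAF.srcSet, RDAF.stateAt, RDAF.init, h] at hx
    | succ c₀ => exact ⟨c₀, rfl⟩
  have hIcc : ∀ m : ℕ, m % n + 1 ∈ Finset.Icc 1 n :=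
    fun m => Finset.mem_Icc.mpr ⟨Nat.le_add_left 1 _, Nat.succ_le_of_lt (Nat.mod_lt _ hn0)⟩
  have h1Icc : (1 : ℕ) ∈ Finset.Icc 1 n := Finset.mem_Icc.mpr ⟨le_refl 1, by omega⟩
  have h1n : 1 % n = 1 := Nat.mod_eq_of_lt (by omega)
  -- true congruence: c + (m+1) ≡ c + (m % n + 1)  [ZMOD n]
  have hmodT : ∀ m : ℕ, ((c₀ + 1 + (m + 1) : ℕ) : ℤ) ≡
      ((c₀ + 1 : ℕ) : ℤ) + ((m % n + 1 : ℕ) : ℤ) [ZMOD (n : ℤ)] := by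
    intro m
    push_cast
    have h := (RDAF.modeq_mod (n : ℤ) (m : ℤ)).add_left ((c₀ : ℤ) + 2)
    have e1 : (c₀ : ℤ) + 1 + ((m : ℤ) % (n : ℤ) + 1) = (c₀ : ℤ) + 2 + (m : ℤ) % (n : ℤ) := by
      ring
    have e2 : (c₀ : ℤ) + 1 + ((m : ℤ) + 1) = (c₀ : ℤ) + 2 + (m : ℤ) := by ring
    rw [e1, e2]
    exact h.symm
  -- false congruence: ¬ (c + m ≡ c + (m % n + 1)) [ZMOD n]
  have hmodF : ∀ m : ℕ, ¬ (((c₀ + 1 + m : ℕ) : ℤ) ≡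
      ((c₀ + 1 : ℕ) : ℤ) + ((m % n + 1 : ℕ) : ℤ) [ZMOD (n : ℤ)]) := by
    intro m h
    have h2 := (hmodT m).trans h.symm
    have hd : (n : ℤ) ∣ ((c₀ + 1 + m : ℕ) : ℤ) - ((c₀ + 1 + (m + 1) : ℕ) : ℤ) :=
      Int.ModEq.dvd h2
    have e : ((c₀ + 1 + m : ℕ) : ℤ) - ((c₀ + 1 + (m + 1) : ℕ) : ℤ) = -1 := by push_cast; ring
    rw [e] at hd
    have h1 : (n : ℤ) ∣ 1 := (dvd_neg).mp hd
    have := Int.le_of_dvd one_pos h1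
    omega
  -- main induction
  have key : ∀ m : ℕ,
      (v (m % n + 1), RDAF.cycEdge v n (m % n + 1)) ∈
        RDAF.trans G g0 d (c₀ + 1 + (m + 1)) := by
    intro m
    induction m with
    | zero =>
      rw [show (0 % n + 1 : ℕ) = 1 by simp]
      have hadj1 : G.Adj (v 1) (v 2) := by
        have h := hadj 1 h1Icc
        rwa [h1n] at h
      refine (RDAF.mem_trans_succ_iff G g0 d (c₀ + 1) _).mpr
        ⟨v 1, v (1 % n + 1), rfl, ?_, ?_, ?_, ?_⟩
      · exact hadj 1 h1Icc
      · exact RDAF.M_of_src G g0 d hrecv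
      · rw [h1n, RDAF.destSet_of_src G g0 d hrecv]
        exact ⟨hadj1, hnotv2⟩
      · refine (hweak (c₀ + 1 + 1) 1 h1Icc (v 1) ?_).mpr ?_
        · exact Sym2.mem_mk_left _ _
        · have := hmodT 0
          rw [show (0 % n + 1 : ℕ) = 1 by simp] at this
          exact this
    | succ m ih =>
      have hAeq : (m % n + 1) % n = (m + 1) % n := by
        conv_rhs => rw [Nat.add_mod, h1n]
      obtain ⟨x, w, hpq, hxw, hM, hdest, hd⟩ :=
        (RDAF.mem_trans_succ_iff G g0 d (c₀ + 1 + m) _).mp ih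
      obtain ⟨hx, hs⟩ := Prod.mk.injEq .. ▸ hpq
      subst hx
      simp only [RDAF.cycEdge, hAeq] at hs
      have hw : v ((m + 1) % n + 1) = w := Sym2.congr_right.mp hs
      subst hw
      -- v_{a'} ∈ s(c+m+1, v_A)
      have hsrc : v (m % n + 1) ∈
          RDAF.srcSet G g0 d (c₀ + 1 + m + 1) (v ((m + 1) % n + 1)) :=
        (RDAF.mem_srcSet_succ_iff G g0 d (c₀ + 1 + m) _ _).mpr ⟨hxw, hM, hdest, hd⟩
      have hne : (RDAF.srcSet G g0 d (c₀ + 1 + m + 1) (v ((m + 1) % n + 1))).Nonempty :=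
        ⟨_, hsrc⟩
      have hMA : RDAF.M G g0 d (c₀ + 1 + m + 1) (v ((m + 1) % n + 1)) :=
        RDAF.M_of_src G g0 d hne
      -- v_B ∈ dest(c+m+1, v_A)
      have hBdest : v (((m + 1) % n + 1) % n + 1) ∈
          RDAF.destSet G g0 d (c₀ + 1 + m + 1) (v ((m + 1) % n + 1)) := by
        rw [RDAF.destSet_of_src G g0 d hne]
        refine ⟨hadj _ (hIcc (m + 1)), ?_⟩
        intro hmem
        obtain ⟨_, _, _, hdB⟩ :=
          (RDAF.mem_srcSet_succ_iff G g0 d (c₀ + 1 + m) _ _).mp hmem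
        rw [Sym2.eq_swap] at hdB
        have hcong := (hweak (c₀ + 1 + m + 1) ((m + 1) % n + 1) (hIcc (m + 1))
          (v (((m + 1) % n + 1) % n + 1)) (Sym2.mem_mk_right _ _)).mp hdB
        exact hmodF (m + 1) hcong
      exact (RDAF.mem_trans_succ_iff G g0 d (c₀ + 1 + (m + 1)) _).mpr
        ⟨v ((m + 1) % n + 1), v (((m + 1) % n + 1) % n + 1), rfl,
          hadj _ (hIcc (m + 1)), hMA, hBdest,
          (hweak (c₀ + 1 + (m + 1 + 1)) ((m + 1) % n + 1) (hIcc (m + 1))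
            (v ((m + 1) % n + 1)) (Sym2.mem_mk_left _ _)).mpr (hmodT (m + 1))⟩
  intro i hi
  have h := key (i - 1)
  have e : i - 1 + 1 = i := by omega
  rw [e] at h
  exact h
end

section
/- Cyclic non-termination (Theorem 1): for every finite connected simple graph G = (V,E) that contains a cycle and every source node g0 ∈ V, there exists a delay function d satisfying the finite delay property such that flooding under d does not terminate: for every round t there exists a node v ∈ V with M(t,v) = 1. -/
/-!
The adversary lets the message travel along an infinite non-backtracking walk `w` starting at the
source: walk to a cycle, then around it forever, in the direction that does not turn back at the
junction. In round `j` it blocks only the transmission from `w (j + 1)` back to `w j`. Inductively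
`w j` holds the message and has `w (j + 1)` as a destination; so in the next round `w (j + 1)`
receives the message from `w j` but not from `w (j + 2)`, and hence keeps `w (j + 2)` as a
destination. A node is blocked in at most one of any two consecutive rounds, so the delay is finite.
-/

open scoped Classical

namespace SimpleGraph

variable {V : Type*} {G : SimpleGraph V}

structure IsNonBacktracking (G : SimpleGraph V) (w : ℕ → V) : Prop where
  adj (t : ℕ) : G.Adj (w t) (w (t + 1))
  ne_add_two (t : ℕ) : w t ≠ w (t + 2)

namespace Walk

variable {u v : V}

lemma getVert_succ_mod_length (c : G.Walk u u) (i : ℕ) :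
    c.getVert ((i + 1) % c.length) = c.getVert (i % c.length + 1) := by
  rcases le_or_gt c.length 1 with hle | hlt
  · have hu (n : ℕ) : c.getVert n = u := by
      rcases n with _ | n
      · exact c.getVert_zero
      · exact c.getVert_of_length_le (by omega)
    rw [hu, hu]
  have := Nat.mod_lt i (zero_lt_one.trans hlt)
  rw [Nat.add_mod_eq_ite, Nat.one_mod_eq_one.mpr hlt.ne']
  split_ifs with h
  · rw [show i % c.length + 1 - c.length = 0 by omega, show i % c.length + 1 = c.length by omega,
      c.getVert_zero, c.getVert_length]
  · rfl

lemma IsCycle.isNonBacktracking_getVert_mod_length {c : G.Walk u u} (hc : c.IsCycle) :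
    G.IsNonBacktracking fun t => c.getVert (t % c.length) where
  adj t := by
    rw [getVert_succ_mod_length]
    exact c.adj_getVert_succ (Nat.mod_lt _ (by have := hc.three_le_length; omega))
  ne_add_two t h := by
    have h3 := hc.three_le_length
    have hmod : t + 0 ≡ t + 2 [MOD c.length] :=
      hc.getVert_injOn' (Nat.le_sub_one_of_lt (Nat.mod_lt _ (by omega)))
        (Nat.le_sub_one_of_lt (Nat.mod_lt _ (by omega))) h
    have := Nat.le_of_dvd two_pos
      (Nat.modEq_zero_iff_dvd.mp (Nat.ModEq.add_left_cancel' t hmod).symm)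
    omega

lemma IsCycle.exists_isCycle_snd_ne {c : G.Walk u u} (hc : c.IsCycle) (x : V) :
    ∃ c' : G.Walk u u, c'.IsCycle ∧ c'.snd ≠ x := by
  by_cases hx : c.snd = x
  · exact ⟨c.reverse, hc.reverse, by rw [snd_reverse, ← hx]; exact hc.snd_ne_penultimate.symm⟩
  · exact ⟨c, hc, hx⟩

lemma IsPath.isNonBacktracking_append {p : G.Walk u v} (hp : p.IsPath) {f : ℕ → V}
    (hf : G.IsNonBacktracking f) (hf0 : f 0 = v) (hpf : p.penultimate ≠ f 1) :
    G.IsNonBacktracking fun t => if t < p.length then p.getVert t else f (t - p.length) := by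
  set w := fun t => if t < p.length then p.getVert t else f (t - p.length)
  have hwp : ∀ t ≤ p.length, w t = p.getVert t := by
    intro t ht
    rcases ht.lt_or_eq with ht | rfl
    · simp [w, ht]
    · simp [w, hf0]
  have hwf : ∀ t, w (t + p.length) = f t := fun t => by simp [w]
  constructor
  · intro t
    by_cases ht : t < p.length
    · rw [hwp t ht.le, hwp (t + 1) ht]
      exact p.adj_getVert_succ ht
    · obtain ⟨s, rfl⟩ : ∃ s, t = s + p.length := ⟨t - p.length, by omega⟩
      rw [hwf, show s + p.length + 1 = s + 1 + p.length by omega, hwf]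
      exact hf.adj s
  · intro t
    rcases lt_trichotomy (t + 1) p.length with ht | ht | ht
    · rw [hwp t (by omega), hwp (t + 2) ht]
      intro h
      have := hp.getVert_injOn (show t ≤ p.length by omega) (show t + 2 ≤ p.length by omega) h
      omega
    · rw [hwp t (by omega), show t + 2 = 1 + p.length by omega, hwf, show t = p.length - 1 by omega]
      exact hpf
    · obtain ⟨s, rfl⟩ : ∃ s, t = s + p.length := ⟨t - p.length, by omega⟩
      rw [hwf, show s + p.length + 2 = s + 2 + p.length by omega, hwf]
      exact hf.ne_add_two s

end Walk

theorem Connected.exists_isNonBacktracking (hconn : G.Connected) (hcyc : ¬G.IsAcyclic) (u : V) :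
    ∃ w : ℕ → V, w 0 = u ∧ G.IsNonBacktracking w := by
  obtain ⟨v, c, hc⟩ : ∃ v, ∃ c : G.Walk v v, c.IsCycle := by
    simpa [IsAcyclic] using hcyc
  obtain ⟨p, hp⟩ := (hconn u v).some.toPath
  obtain ⟨c', hc', hsnd⟩ := hc.exists_isCycle_snd_ne p.penultimate
  refine ⟨_, ?_, hp.isNonBacktracking_append hc'.isNonBacktracking_getVert_mod_length
    (by simp) ?_⟩
  · rcases Nat.eq_zero_or_pos p.length with h0 | hpos
    · simp [p.eq_of_length_eq_zero h0]
    · simp [hpos]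
  · simpa [Nat.mod_eq_of_lt (show 1 < c'.length by have := hc'.three_le_length; omega)]
      using hsnd.symm

end SimpleGraph

namespace RDAF

variable {V : Type*} {G : SimpleGraph V} {d : ℕ → V → Sym2 V → Bool} {j : ℕ}
  {st : V → RDAFState V} {u v : V}

lemma mem_step_src_iff : v ∈ (step G d j st u).src ↔
    G.Adj v u ∧ (st v).hasMsg ∧ u ∈ (st v).dst ∧ d (j + 1) v s(v, u) = false :=
  Iff.rfl

lemma step_hasMsg_of_src_nonempty (h : (step G d j st u).src.Nonempty) :
    (step G d j st u).hasMsg :=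
  Or.inl h

lemma step_dst_of_src_nonempty (h : (step G d j st u).src.Nonempty) :
    (step G d j st u).dst = G.neighborSet u \ (step G d j st u).src :=
  if_pos h

noncomputable def backtrackDelay (w : ℕ → V) : ℕ → V → Sym2 V → Bool :=
  fun j v e => decide (v = w (j + 1) ∧ e = s(w (j + 1), w j))

lemma backtrackDelay_of_ne {w : ℕ → V} {e : Sym2 V} (h : v ≠ w (j + 1)) :
    backtrackDelay w j v e = false :=
  decide_eq_false fun h' => h h'.1

lemma backtrackDelay_backtrack (w : ℕ → V) (j : ℕ) :
    backtrackDelay w j (w (j + 1)) s(w (j + 1), w j) = true :=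
  decide_eq_true ⟨rfl, rfl⟩

lemma finiteDelay_backtrackDelay {w : ℕ → V} (hw : ∀ j, w j ≠ w (j + 1)) :
    FiniteDelay G (backtrackDelay w) := by
  intro v e _ _ j
  by_cases hv : v = w (j + 1)
  · exact ⟨j + 1, j.le_succ, backtrackDelay_of_ne (hv ▸ hw (j + 1))⟩
  · exact ⟨j, le_rfl, backtrackDelay_of_ne hv⟩

theorem M_and_mem_destSet_backtrackDelay {g0 : V} {w : ℕ → V} (hw : G.IsNonBacktracking w)
    (hw0 : w 0 = g0) (t : ℕ) :
    M G g0 (backtrackDelay w) t (w t) ∧ w (t + 1) ∈ destSet G g0 (backtrackDelay w) t (w t) := by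
  induction t with
  | zero =>
    subst hw0
    simpa [M, destSet, stateAt, init] using hw.adj 0
  | succ t ih =>
    have hsrc : w t ∈ srcSet G g0 (backtrackDelay w) (t + 1) (w (t + 1)) :=
      ⟨hw.adj t, ih.1, ih.2, backtrackDelay_of_ne (hw.ne_add_two t)⟩
    refine ⟨step_hasMsg_of_src_nonempty ⟨_, hsrc⟩, ?_⟩
    rw [destSet, stateAt, step_dst_of_src_nonempty ⟨_, hsrc⟩]
    refine ⟨hw.adj (t + 1), fun h => ?_⟩
    have := (mem_step_src_iff.mp h).2.2.2
    rw [backtrackDelay_backtrack] at this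
    exact Bool.noConfusion this

end RDAF

theorem RDAF.cyclic_non_termination_general
    {V : Type*} (G : SimpleGraph V) (hconn : G.Connected)
    (hcyc : ¬ G.IsAcyclic) (g0 : V) :
    ∃ d : ℕ → V → Sym2 V → Bool, RDAF.FiniteDelay G d ∧
      ∀ t : ℕ, ∃ u : V, RDAF.M G g0 d t u := by
  obtain ⟨w, hw0, hw⟩ := hconn.exists_isNonBacktracking hcyc g0
  exact ⟨RDAF.backtrackDelay w, RDAF.finiteDelay_backtrackDelay fun j => (hw.adj j).ne,
    fun t => ⟨w t, (RDAF.M_and_mem_destSet_backtrackDelay hw hw0 t).1⟩⟩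

/-- **Cyclic non-termination (Theorem 1).** For every finite connected simple graph containing
a cycle and every source node, there is a delay function satisfying the finite delay property
under which flooding does not terminate. -/
theorem RDAF.cyclic_non_termination
    {V : Type*} [Fintype V] (G : SimpleGraph V) (hconn : G.Connected)
    (hcyc : ¬ G.IsAcyclic) (g0 : V) :
    ∃ d : ℕ → V → Sym2 V → Bool, RDAF.FiniteDelay G d ∧
      ∀ t : ℕ, ∃ u : V, RDAF.M G g0 d t u :=
  RDAF.cyclic_non_termination_general G hconn hcyc g0
end

section
/- Identification of Periodic Infinite Schedules (IPIS, Theorem 2): let d be a delay function, and suppose there exist c ∈ ℕ and p, l ∈ ℕ with p, l ≥ 1 such that: (1) d(i,v,e) = d(i+p,v,e) for every i ≥ c, every v ∈ V and every edge e incident to v; (2) S(c,u) = S(c+l,u) for every u ∈ V; (3) p divides l; and (4) r(c+j) ≠ ∅ for some j ∈ {0,…,l−1}. Then the schedule induced by d is periodic infinite with parameters (c,l): σ(j) = σ(j+l) for every j ≥ c, and r(c+k) ≠ ∅ for some k ∈ {0,…,l−1}. -/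
open scoped Classical

namespace RDAF

variable {V : Type*}

lemma dst_sub (G : SimpleGraph V) (g0 : V) (d : ℕ → V → Sym2 V → Bool) :
    ∀ j u, (stateAt G g0 d j u).dst ⊆ G.neighborSet u := by
  intro j
  induction j with
  | zero =>
    intro u v hv
    simp only [stateAt, init] at hv
    split at hv
    · subst ‹u = g0›; exact hv
    · exact hv.elim
  | succ j ih =>
    intro u v hv
    simp only [stateAt, step] at hv
    split at hv
    · exact hv.1
    · split at hv
      · exact ih u hv.1
      · exact hv.elim

lemma step_congr (G : SimpleGraph V) (d : ℕ → V → Sym2 V → Bool) (j1 j2 : ℕ)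
    (st : V → RDAFState V)
    (hdst : ∀ u, (st u).dst ⊆ G.neighborSet u)
    (hd : ∀ u : V, ∀ e ∈ G.edgeSet, u ∈ e → d (j1 + 1) u e = d (j2 + 1) u e) :
    step G d j1 st = step G d j2 st := by
  funext u
  have hs : {v | G.Adj v u ∧ (st v).hasMsg ∧ u ∈ (st v).dst ∧ d (j1 + 1) v s(v, u) = false}
      = {v | G.Adj v u ∧ (st v).hasMsg ∧ u ∈ (st v).dst ∧ d (j2 + 1) v s(v, u) = false} := by
    ext v
    simp only [Set.mem_setOf_eq]
    have key : ∀ h : G.Adj v u, d (j1 + 1) v s(v, u) = d (j2 + 1) v s(v, u) := fun h =>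
      hd v s(v, u) (G.mem_edgeSet.2 h) (Sym2.mem_mk_left v u)
    constructor <;> rintro ⟨ha, hm, hdv, hdd⟩
    · exact ⟨ha, hm, hdv, by rw [← key ha]; exact hdd⟩
    · exact ⟨ha, hm, hdv, by rw [key ha]; exact hdd⟩
  have ht : ({v | v ∈ (st u).dst ∧ d (j1 + 1) u s(u, v) = true} : Set V)
      = {v | v ∈ (st u).dst ∧ d (j2 + 1) u s(u, v) = true} := by
    ext v
    simp only [Set.mem_setOf_eq]
    have key : ∀ _ : v ∈ (st u).dst, d (j1 + 1) u s(u, v) = d (j2 + 1) u s(u, v) := fun hv =>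
      hd u s(u, v) (G.mem_edgeSet.2 (hdst u hv)) (Sym2.mem_mk_left u v)
    constructor <;> rintro ⟨hv, hdd⟩
    · exact ⟨hv, by rw [← key hv]; exact hdd⟩
    · exact ⟨hv, by rw [key hv]; exact hdd⟩
  simp only [step]
  rw [hs, ht]

lemma trans_char (G : SimpleGraph V) (g0 : V) (d : ℕ → V → Sym2 V → Bool) :
    ∀ j, trans G g0 d j =
      {p : V × Sym2 V | ∃ v w : V, p = (v, s(v, w)) ∧ v ∈ (stateAt G g0 d j w).src} := by
  intro j
  cases j with
  | zero =>
    ext p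
    simp only [trans, Set.mem_empty_iff_false, Set.mem_setOf_eq, false_iff]
    rintro ⟨v, w, -, hv⟩
    simp only [stateAt, init] at hv
    split at hv <;> exact hv
  | succ j =>
    ext p
    simp only [trans, stateAt, step, M, destSet, Set.mem_setOf_eq]

end RDAF

/-- **Identification of Periodic Infinite Schedules (IPIS, Theorem 2).** If the delay function
is eventually periodic with period `p` from round `c`, the states at rounds `c` and `c + l`
agree, `p` divides `l`, and some transmission occurs in rounds `c, …, c+l-1`, then the induced
schedule is periodic infinite with parameters `(c, l)`. -/
theorem RDAF.identification_of_periodic_infinite_schedules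
    {V : Type*} (G : SimpleGraph V) (g0 : V) (d : ℕ → V → Sym2 V → Bool)
    (c p l : ℕ) (hp : 1 ≤ p) (hl : 1 ≤ l)
    (hper : ∀ i : ℕ, c ≤ i → ∀ u : V, ∀ e ∈ G.edgeSet, u ∈ e → d i u e = d (i + p) u e)
    (hstate : ∀ u : V, RDAF.stateAt G g0 d c u = RDAF.stateAt G g0 d (c + l) u)
    (hdvd : p ∣ l)
    (htrans : ∃ j < l, (RDAF.trans G g0 d (c + j)).Nonempty) :
    RDAF.PeriodicInfinite G g0 d c l := by
  classical
  obtain ⟨m, hm⟩ := hdvd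
  have key : ∀ m i, c ≤ i → ∀ u : V, ∀ e ∈ G.edgeSet, u ∈ e → d i u e = d (i + p * m) u e := by
    intro m
    induction m with
    | zero => intro i hi u e he hu; simp
    | succ m ih =>
      intro i hi u e he hu
      rw [hper i hi u e he hu, ih (i + p) (by omega) u e he hu]
      congr 1; ring
  have hper_l : ∀ i, c ≤ i → ∀ u : V, ∀ e ∈ G.edgeSet, u ∈ e → d i u e = d (i + l) u e := by
    intro i hi u e he hu
    rw [hm]; exact key m i hi u e he hu
  have sh : ∀ k, RDAF.stateAt G g0 d (c + k) = RDAF.stateAt G g0 d (c + l + k) := by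
    intro k
    induction k with
    | zero => simpa using funext hstate
    | succ k ih =>
      have e1 : c + (k + 1) = (c + k) + 1 := by ring
      have e2 : c + l + (k + 1) = (c + l + k) + 1 := by ring
      rw [e1, e2]
      show RDAF.step G d (c + k) (RDAF.stateAt G g0 d (c + k))
          = RDAF.step G d (c + l + k) (RDAF.stateAt G g0 d (c + l + k))
      rw [← ih]
      refine RDAF.step_congr G d _ _ _ (fun u => RDAF.dst_sub G g0 d _ u) ?_
      intro u e he hu
      have h := hper_l (c + k + 1) (by omega) u e he hu
      rw [show c + l + k + 1 = c + k + 1 + l by ring]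
      exact h
  refine ⟨hl, ?_, htrans⟩
  intro j hj
  obtain ⟨k, rfl⟩ : ∃ k, j = c + k := ⟨j - c, by omega⟩
  have hst : RDAF.stateAt G g0 d (c + k) = RDAF.stateAt G g0 d (c + k + l) := by
    rw [show c + k + l = c + l + k by ring]; exact sh k
  unfold RDAF.config
  rw [RDAF.trans_char G g0 d (c + k), RDAF.trans_char G g0 d (c + k + l), hst]
end

section
/- Non-Termination of Periodic Infinite Schedules (NTPIS, Theorem 3): if the schedule induced by a delay function d is periodic infinite with parameters (c,l), then flooding under d does not terminate: there is no round t such that M(t,v) = 0 for every v ∈ V. -/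
open scoped Classical

/-- **Non-Termination of Periodic Infinite Schedules (NTPIS, Theorem 3).** If the schedule
induced by a delay function is periodic infinite, then flooding does not terminate: there is no
round at which no node has the message. -/
theorem RDAF.periodic_infinite_schedules_non_terminating
    {V : Type*} (G : SimpleGraph V) (g0 : V) (d : ℕ → V → Sym2 V → Bool)
    (c l : ℕ) (hpis : RDAF.PeriodicInfinite G g0 d c l) :
    ¬ ∃ t : ℕ, ∀ v : V, ¬ RDAF.M G g0 d t v := by
  obtain ⟨hl, hper, k, hk, hne⟩ := hpis
  rintro ⟨t, ht⟩
  -- once terminated, stays terminated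
  have hM : ∀ n v, ¬ RDAF.M G g0 d (t + n) v := by
    intro n
    induction n with
    | zero => simpa using ht
    | succ n ih =>
      intro v hv
      have hv' : (RDAF.step G d (t + n) (RDAF.stateAt G g0 d (t + n)) v).hasMsg := hv
      simp only [RDAF.step] at hv'
      have hs : {w | G.Adj w v ∧ (RDAF.stateAt G g0 d (t + n) w).hasMsg ∧
          v ∈ (RDAF.stateAt G g0 d (t + n) w).dst ∧
          d (t + n + 1) w s(w, v) = false} = (∅ : Set V) := by
        ext w
        simp only [Set.mem_setOf_eq, Set.mem_empty_iff_false, iff_false]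
        rintro ⟨-, hm, -, -⟩
        exact ih w hm
      rw [hs] at hv'
      have hmu : ¬ (RDAF.stateAt G g0 d (t + n) v).hasMsg := ih v
      simp [Set.not_nonempty_empty, hmu] at hv'
  -- trans is periodic
  have htrans : ∀ n : ℕ, RDAF.trans G g0 d (c + k + n * l) = RDAF.trans G g0 d (c + k) := by
    intro n
    induction n with
    | zero => simp
    | succ n ih =>
      have h1 : RDAF.config G g0 d (c + k + n * l) =
          RDAF.config G g0 d (c + k + n * l + l) := hper _ (by omega)
      have h2 : RDAF.trans G g0 d (c + k + n * l) =
          RDAF.trans G g0 d (c + k + n * l + l) := congrArg Prod.snd h1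
      have : c + k + (n + 1) * l = c + k + n * l + l := by ring
      rw [this, ← h2, ih]
  set m := c + k + (t + 1) * l with hm
  have hml : t + 1 ≤ m := by
    have : t + 1 ≤ (t + 1) * l := Nat.le_mul_of_pos_right _ (by omega)
    omega
  have hne' : (RDAF.trans G g0 d m).Nonempty := by rw [hm, htrans]; exact hne
  obtain ⟨p, hp⟩ := hne'
  clear_value m
  obtain ⟨m', rfl⟩ : ∃ m', m = m' + 1 := ⟨m - 1, by omega⟩
  simp only [RDAF.trans, Set.mem_setOf_eq] at hp
  obtain ⟨v, w, -, -, hMv, -, -⟩ := hp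
  obtain ⟨n, rfl⟩ : ∃ n, m' = t + n := ⟨m' - t, by omega⟩
  exact hM n v hMv
end

section
/- Halting reduction (core of Theorem 5): for every code e : Nat.Partrec.Code and every input x ∈ ℕ, flooding on the triangle graph with source g0 under the delay function d_{e,x} terminates (there exists a round t with M(t,v) = 0 for every v ∈ V) if and only if e halts on x, i.e. (Nat.Partrec.Code.eval e x).Dom. -/
open scoped Classical

namespace RDAF

variable {V : Type*}

/-- The triangle graph on the vertices `g0, A, B`. -/
def triangle (g0 A B : V) : SimpleGraph V :=
  SimpleGraph.fromEdgeSet {s(g0, A), s(A, B), s(B, g0)}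

/-- The basic delay function `d0` on the triangle. -/
noncomputable def d0 (g0 A B : V) : ℕ → V → Sym2 V → Bool := fun j _ e =>
  if (j % 3 = 0 ∧ e ≠ s(g0, B)) ∨ (j % 3 = 1 ∧ e ≠ s(g0, A)) ∨ (j % 3 = 2 ∧ e ≠ s(A, B))
  then true else false

end RDAF

namespace RDAF

/-- The delay function `d_{e,x}` on the triangle: no delays from the moment the code `cde`
halts on input `x` (within `j` steps); the basic delay function `d0` otherwise. -/
noncomputable def dEX {V : Type*} (g0 A B : V) (cde : Nat.Partrec.Code) (x : ℕ) :
    ℕ → V → Sym2 V → Bool := fun j u e =>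
  if Nat.Partrec.Code.evaln j cde x ≠ none then false else d0 g0 A B j u e

end RDAF


namespace RDAFAux

structure TriNode where
  m : Bool
  dst : Fin 3 → Bool

instance : DecidableEq TriNode := fun a b =>
  decidable_of_iff (a.m = b.m ∧ a.dst = b.dst) (by cases a; cases b; simp)

abbrev Cfg := Fin 3 → TriNode

def adjB (i j : Fin 3) : Bool := decide (i ≠ j)

def cstep (D : Fin 3 → Fin 3 → Bool) (c : Cfg) : Cfg := fun u =>
  let s : Fin 3 → Bool := fun v => adjB v u && (c v).m && (c v).dst u && !(D v u)
  let sne : Bool := s 0 || s 1 || s 2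
  let t : Fin 3 → Bool :=
    if sne then fun v => adjB u v && !(s v)
    else if (c u).m then fun v => (c u).dst v && D u v
    else fun _ => false
  ⟨sne || (t 0 || t 1 || t 2), t⟩

def cinit : Cfg := fun u => if u = 0 then ⟨true, fun v => adjB 0 v⟩ else ⟨false, fun _ => false⟩

def crun (D : ℕ → Fin 3 → Fin 3 → Bool) : ℕ → Cfg
  | 0 => cinit
  | j + 1 => cstep (D (j + 1)) (crun D j)

def someM (c : Cfg) : Bool := (c 0).m || (c 1).m || (c 2).m

def allOff (c : Cfg) : Bool := !(c 0).m && !(c 1).m && !(c 2).m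

def d0tab (r : ℕ) : Fin 3 → Fin 3 → Bool := fun v w =>
  let e01 : Bool := (v == 0 && w == 1) || (v == 1 && w == 0)
  let e12 : Bool := (v == 1 && w == 2) || (v == 2 && w == 1)
  let e02 : Bool := (v == 0 && w == 2) || (v == 2 && w == 0)
  ((r == 0 && !e02) || (r == 1 && !e01) || (r == 2 && !e12))

def run : ℕ → Cfg := crun (fun j => d0tab (j % 3))

def ostep (c : Cfg) : Cfg := cstep (fun _ _ => false) c

lemma run_succ (j : ℕ) : run (j + 1) = cstep (d0tab ((j + 1) % 3)) (run j) := rfl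

lemma run_periodic : ∀ k, run (8 + k) = run (2 + k) := by
  intro k
  induction k with
  | zero => decide
  | succ k ih =>
    have h1 : 8 + (k + 1) = (8 + k) + 1 := by omega
    have h2 : 2 + (k + 1) = (2 + k) + 1 := by omega
    rw [h1, h2, run_succ, run_succ, ih]
    have h3 : (8 + k + 1) % 3 = (2 + k + 1) % 3 := by omega
    rw [h3]

lemma run_reduce : ∀ m, ∃ j, j < 8 ∧ run m = run j := by
  intro m
  induction m using Nat.strong_induction_on with
  | _ m ih =>
    rcases lt_or_ge m 8 with h | h
    · exact ⟨m, h, rfl⟩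
    · obtain ⟨j, hj, hr⟩ := ih (m - 6) (by omega)
      have hm : run m = run (m - 6) := by
        have h1 := run_periodic (m - 8)
        have e1 : 8 + (m - 8) = m := by omega
        have e2 : 2 + (m - 8) = m - 6 := by omega
        rw [e1, e2] at h1
        exact h1
      exact ⟨j, hj, hm.trans hr⟩

lemma someM_run (m : ℕ) : someM (run m) = true := by
  obtain ⟨j, hj, hr⟩ := run_reduce m
  rw [hr]
  interval_cases j <;> decide

lemma kill4 : ∀ j < 8, allOff (ostep (ostep (ostep (ostep (run j))))) = true := by decide

lemma someM_exists {c : Cfg} (h : someM c = true) : ∃ i, (c i).m = true := by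
  rcases Bool.or_eq_true_iff.1 h with h | h
  · rcases Bool.or_eq_true_iff.1 h with h | h
    · exact ⟨0, h⟩
    · exact ⟨1, h⟩
  · exact ⟨2, h⟩

lemma allOff_forall {c : Cfg} (h : allOff c = true) : ∀ i, (c i).m = false := by
  intro i
  have h1 := Bool.and_eq_true_iff.1 h
  have h2 := Bool.and_eq_true_iff.1 h1.1
  fin_cases i <;> simp_all

lemma evaln_zero (c : Nat.Partrec.Code) (x : ℕ) :
    Nat.Partrec.Code.evaln 0 c x = none := by
  cases h : Nat.Partrec.Code.evaln 0 c x with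
  | none => rfl
  | some a => exact absurd (Nat.Partrec.Code.evaln_bound h) (by omega)

section Bridge

variable {V : Type*} (g0 A B : V)

def ι : Fin 3 → V := ![g0, A, B]

variable {g0 A B}

section
variable (hAB : A ≠ B) (hBg : B ≠ g0) (hgA : g0 ≠ A)
  (hcover : ∀ u : V, u = g0 ∨ u = A ∨ u = B)

include hAB hBg hgA in
lemma iota_inj : Function.Injective (ι g0 A B) := by
  intro i j h
  fin_cases i <;> fin_cases j <;>
    simp_all [ι, hAB, hBg, hgA, hAB.symm, hBg.symm, hgA.symm]

include hcover in
lemma iota_surj : ∀ v : V, ∃ i, ι g0 A B i = v := by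
  intro v
  rcases hcover v with h | h | h
  · exact ⟨0, h.symm⟩
  · exact ⟨1, h.symm⟩
  · exact ⟨2, h.symm⟩

include hAB hBg hgA in
lemma adj_iota (i j : Fin 3) :
    (RDAF.triangle g0 A B).Adj (ι g0 A B i) (ι g0 A B j) ↔ i ≠ j := by
  fin_cases i <;> fin_cases j <;>
    simp [RDAF.triangle, SimpleGraph.fromEdgeSet_adj, ι, Sym2.eq_iff,
      hAB, hBg, hgA, hAB.symm, hBg.symm, hgA.symm]

include hcover in
lemma nonempty_iff (S : Set V) (f : Fin 3 → Bool)
    (h : ∀ i, ι g0 A B i ∈ S ↔ f i = true) :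
    S.Nonempty ↔ (f 0 || f 1 || f 2) = true := by
  constructor
  · rintro ⟨v, hv⟩
    obtain ⟨i, rfl⟩ := iota_surj hcover v
    have := (h i).1 hv
    fin_cases i <;> simp_all
  · intro hf
    rcases Bool.or_eq_true_iff.1 hf with hf | hf
    · rcases Bool.or_eq_true_iff.1 hf with hf | hf
      · exact ⟨_, (h 0).2 hf⟩
      · exact ⟨_, (h 1).2 hf⟩
    · exact ⟨_, (h 2).2 hf⟩

def Matches (st : V → RDAFState V) (c : Cfg) : Prop :=
  ∀ i : Fin 3, ((st (ι g0 A B i)).hasMsg ↔ (c i).m = true) ∧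
    ∀ i' : Fin 3, (ι g0 A B i' ∈ (st (ι g0 A B i)).dst ↔ (c i).dst i' = true)

set_option linter.unusedSectionVars false

include hAB hBg hgA hcover in
lemma matches_init : Matches (g0 := g0) (A := A) (B := B)
    (RDAF.init (RDAF.triangle g0 A B) g0) cinit := by
  intro i
  have hi0 : ι g0 A B 0 = g0 := rfl
  constructor
  · by_cases h : i = 0
    · subst h; simp [RDAF.init, cinit, hi0]
    · have : ι g0 A B i ≠ g0 := by
        rw [← hi0]; exact fun hc => h (iota_inj hAB hBg hgA hc)
      simp [RDAF.init, cinit, this, h]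
  · intro i'
    by_cases h : i = 0
    · subst h
      simp only [RDAF.init, hi0, if_pos rfl, cinit, if_true, if_pos trivial]
      show ι g0 A B i' ∈ (RDAF.triangle g0 A B).neighborSet g0 ↔ _
      have h2 : (RDAF.triangle g0 A B).Adj g0 (ι g0 A B i') ↔ (0 : Fin 3) ≠ i' := by
        simpa [ι] using adj_iota hAB hBg hgA (g0 := g0) (A := A) (B := B) 0 i'
      rw [SimpleGraph.mem_neighborSet, h2]
      simp [adjB, ne_comm]
    · have : ι g0 A B i ≠ g0 := by
        rw [← hi0]; exact fun hc => h (iota_inj hAB hBg hgA hc)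
      simp [RDAF.init, cinit, this, h]

include hAB hBg hgA hcover in
lemma matches_step (d : ℕ → V → Sym2 V → Bool) (j : ℕ) (st : V → RDAFState V) (c : Cfg)
    (h : Matches (g0 := g0) (A := A) (B := B) st c) :
    Matches (g0 := g0) (A := A) (B := B)
      (RDAF.step (RDAF.triangle g0 A B) d j st)
      (cstep (fun v w => d (j + 1) (ι g0 A B v) s(ι g0 A B v, ι g0 A B w)) c) := by
  set D : Fin 3 → Fin 3 → Bool :=
    fun v w => d (j + 1) (ι g0 A B v) s(ι g0 A B v, ι g0 A B w) with hD
  intro i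
  set S : Set V := {v | (RDAF.triangle g0 A B).Adj v (ι g0 A B i) ∧ (st v).hasMsg ∧
      ι g0 A B i ∈ (st v).dst ∧ d (j + 1) v s(v, ι g0 A B i) = false} with hS
  set sb : Fin 3 → Bool := fun v => adjB v i && (c v).m && (c v).dst i && !(D v i) with hsb
  have hmem : ∀ i'' : Fin 3, ι g0 A B i'' ∈ S ↔ sb i'' = true := by
    intro i''
    have hM := (h i'').1
    have hDst := (h i'').2 i
    simp only [hS, Set.mem_setOf_eq, hsb, Bool.and_eq_true, Bool.not_eq_true', adjB,
      decide_eq_true_eq, hD]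
    rw [adj_iota hAB hBg hgA, hM, hDst]
    tauto
  have hne := nonempty_iff hcover S sb hmem
  set T : Set V :=
    (if S.Nonempty then (RDAF.triangle g0 A B).neighborSet (ι g0 A B i) \ S
     else if (st (ι g0 A B i)).hasMsg then
       {v | v ∈ (st (ι g0 A B i)).dst ∧ d (j + 1) (ι g0 A B i) s(ι g0 A B i, v) = true}
     else ∅) with hT
  have hstep : RDAF.step (RDAF.triangle g0 A B) d j st (ι g0 A B i) =
      ⟨S.Nonempty ∨ T.Nonempty, S, T⟩ := rfl
  set sne : Bool := sb 0 || sb 1 || sb 2 with hsne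
  set t : Fin 3 → Bool :=
    (if sne then fun v => adjB i v && !(sb v)
     else if (c i).m then fun v => (c i).dst v && D i v
     else fun _ => false) with ht
  have hcstep : cstep D c i = ⟨sne || (t 0 || t 1 || t 2), t⟩ := rfl
  have htm : ∀ i' : Fin 3, (ι g0 A B i' ∈ T ↔ t i' = true) := by
    intro i'
    by_cases hsn : S.Nonempty
    · have hb : sne = true := hne.1 hsn
      rw [hT, if_pos hsn, ht, if_pos hb]
      simp only [Set.mem_diff, SimpleGraph.mem_neighborSet, Bool.and_eq_true,
        Bool.not_eq_true', adjB, decide_eq_true_eq]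
      rw [adj_iota hAB hBg hgA]
      constructor
      · rintro ⟨h1, h2⟩
        refine ⟨h1, ?_⟩
        cases hq : sb i' with
        | false => rfl
        | true => exact absurd ((hmem i').2 hq) h2
      · rintro ⟨h1, h2⟩
        exact ⟨h1, fun hc => by simp [(hmem i').1 hc] at h2⟩
    · have hb : sne = false := by
        cases hq : sne with
        | false => rfl
        | true => exact absurd (hne.2 hq) hsn
      rw [hT, if_neg hsn, ht, hb]
      simp only [Bool.false_eq_true, if_false]
      by_cases hm : (st (ι g0 A B i)).hasMsg
      · have hmb : (c i).m = true := (h i).1.1 hm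
        rw [if_pos hm, if_pos hmb]
        simp only [Set.mem_setOf_eq, Bool.and_eq_true, hD]
        rw [(h i).2 i']
      · have hmb : (c i).m = false := by
          cases hq : (c i).m with
          | false => rfl
          | true => exact absurd ((h i).1.2 hq) hm
        rw [if_neg hm, if_neg (by simp [hmb])]
        simp
  rw [hstep, hcstep]
  constructor
  · show S.Nonempty ∨ T.Nonempty ↔ (sne || (t 0 || t 1 || t 2)) = true
    rw [Bool.or_eq_true, ← hne, ← nonempty_iff hcover T t htm]
  · intro i'
    exact htm i'

include hAB hBg hgA hcover in
lemma matches_crun (d : ℕ → V → Sym2 V → Bool) :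
    ∀ j : ℕ, Matches (g0 := g0) (A := A) (B := B)
      (RDAF.stateAt (RDAF.triangle g0 A B) g0 d j)
      (crun (fun j v w => d j (ι g0 A B v) s(ι g0 A B v, ι g0 A B w)) j) := by
  intro j
  induction j with
  | zero => exact matches_init hAB hBg hgA hcover
  | succ j ih =>
    show Matches (RDAF.step (RDAF.triangle g0 A B) d j
        (RDAF.stateAt (RDAF.triangle g0 A B) g0 d j))
      (cstep (fun v w => d (j + 1) (ι g0 A B v) s(ι g0 A B v, ι g0 A B w))
        (crun (fun j v w => d j (ι g0 A B v) s(ι g0 A B v, ι g0 A B w)) j))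
    exact matches_step hAB hBg hgA hcover d j _ _ ih

include hAB hBg hgA in
lemma d0_tab (jj : ℕ) (u : V) (v w : Fin 3) :
    RDAF.d0 g0 A B jj u s(ι g0 A B v, ι g0 A B w) = d0tab (jj % 3) v w := by
  have h3 : jj % 3 = 0 ∨ jj % 3 = 1 ∨ jj % 3 = 2 := by omega
  rcases h3 with h | h | h <;>
    fin_cases v <;> fin_cases w <;>
      simp [RDAF.d0, d0tab, ι, h, Sym2.eq_iff, hAB, hBg, hgA,
        hAB.symm, hBg.symm, hgA.symm]

end
end Bridge
end RDAFAux

/-- **Halting reduction (core of Theorem 5).** For every code `cde` and input `x`, flooding on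
the triangle graph with source `g0` under the delay function `d_{cde,x}` terminates if and only
if `cde` halts on `x`. -/
theorem RDAF.halting_reduction
    {V : Type*} (g0 A B : V)
    (hAB : A ≠ B) (hBg : B ≠ g0) (hgA : g0 ≠ A)
    (hcover : ∀ u : V, u = g0 ∨ u = A ∨ u = B)
    (cde : Nat.Partrec.Code) (x : ℕ) :
    RDAF.Terminates (RDAF.triangle g0 A B) g0 (RDAF.dEX g0 A B cde x) ↔
      (Nat.Partrec.Code.eval cde x).Dom := by
  set d : ℕ → V → Sym2 V → Bool := RDAF.dEX g0 A B cde x with hd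
  set DD : ℕ → Fin 3 → Fin 3 → Bool :=
    fun j v w => d j (RDAFAux.ι g0 A B v) s(RDAFAux.ι g0 A B v, RDAFAux.ι g0 A B w) with hDD
  have hmat : ∀ j : ℕ, RDAFAux.Matches (g0 := g0) (A := A) (B := B)
      (RDAF.stateAt (RDAF.triangle g0 A B) g0 d j) (RDAFAux.crun DD j) :=
    RDAFAux.matches_crun hAB hBg hgA hcover d
  constructor
  · rintro ⟨t, ht⟩
    by_contra hdom
    have hnone : ∀ k, Nat.Partrec.Code.evaln k cde x = none := by
      intro k
      cases hq : Nat.Partrec.Code.evaln k cde x with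
      | none => rfl
      | some a => exact absurd (Part.dom_iff_mem.2 ⟨a, Nat.Partrec.Code.evaln_sound hq⟩) hdom
    have hDt : DD = fun j => RDAFAux.d0tab (j % 3) := by
      funext j v w
      show d j _ _ = _
      rw [hd]
      show RDAF.dEX g0 A B cde x j _ _ = _
      unfold RDAF.dEX
      rw [if_neg (by simp [hnone j])]
      exact RDAFAux.d0_tab hAB hBg hgA j _ v w
    obtain ⟨i, hi⟩ := RDAFAux.someM_exists (RDAFAux.someM_run t)
    have hmt := hmat t
    rw [hDt] at hmt
    exact ht _ ((hmt i).1.2 hi)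
  · intro hdom
    obtain ⟨a, ha⟩ := Part.dom_iff_mem.1 hdom
    obtain ⟨k1, hk1⟩ := Nat.Partrec.Code.evaln_complete.1 ha
    have hex : ∃ k, Nat.Partrec.Code.evaln k cde x ≠ none := ⟨k1, by
      rw [Option.mem_def] at hk1; simp [hk1]⟩
    set k0 := Nat.find hex with hk0
    have hk0pos : 1 ≤ k0 := by
      rcases Nat.eq_zero_or_pos k0 with h | h
      · exact absurd (RDAFAux.evaln_zero cde x) (h ▸ Nat.find_spec hex)
      · exact h
    have hlt : ∀ j, j < k0 → Nat.Partrec.Code.evaln j cde x = none := by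
      intro j hj
      by_contra hq
      exact Nat.find_min hex hj hq
    have hge : ∀ j, k0 ≤ j → Nat.Partrec.Code.evaln j cde x ≠ none := by
      intro j hj
      obtain ⟨b, hb⟩ := Option.ne_none_iff_exists'.1 (Nat.find_spec hex)
      have hmono := Nat.Partrec.Code.evaln_mono hj hb
      rw [Option.mem_def] at hmono
      simp [hmono]
    have hDlt : ∀ j, j < k0 → DD j = RDAFAux.d0tab (j % 3) := by
      intro j hj
      funext v w
      show RDAF.dEX g0 A B cde x j _ _ = _
      unfold RDAF.dEX
      rw [if_neg (by simp [hlt j hj])]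
      exact RDAFAux.d0_tab hAB hBg hgA j _ v w
    have hDge : ∀ j, k0 ≤ j → DD j = fun _ _ => false := by
      intro j hj
      funext v w
      show RDAF.dEX g0 A B cde x j _ _ = _
      unfold RDAF.dEX
      rw [if_pos (hge j hj)]
    have hrun : ∀ j, j < k0 → RDAFAux.crun DD j = RDAFAux.run j := by
      intro j
      induction j with
      | zero => intro _; rfl
      | succ j ih =>
        intro hj
        show RDAFAux.cstep (DD (j + 1)) (RDAFAux.crun DD j)
            = RDAFAux.cstep (RDAFAux.d0tab ((j + 1) % 3)) (RDAFAux.run j)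
        rw [ih (by omega), hDlt (j + 1) hj]
    have hcs : ∀ i : ℕ, RDAFAux.crun DD (k0 + i)
        = RDAFAux.ostep (RDAFAux.crun DD (k0 + i - 1)) := by
      intro i
      have h1 : k0 + i = (k0 + i - 1) + 1 := by omega
      rw [h1]
      show RDAFAux.cstep (DD (k0 + i - 1 + 1)) _ = _
      rw [hDge _ (by omega)]
      rfl
    have hfin : RDAFAux.crun DD (k0 + 3) =
        RDAFAux.ostep (RDAFAux.ostep (RDAFAux.ostep (RDAFAux.ostep
          (RDAFAux.run (k0 - 1))))) := by
      have e3 := hcs 3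
      have e2 := hcs 2
      have e1 := hcs 1
      have e0 := hcs 0
      have g3 : k0 + 3 - 1 = k0 + 2 := by omega
      have g2 : k0 + 2 - 1 = k0 + 1 := by omega
      have g1 : k0 + 1 - 1 = k0 + 0 := by omega
      have g0' : k0 + 0 - 1 = k0 - 1 := by omega
      rw [g3] at e3; rw [g2] at e2; rw [g1] at e1; rw [g0'] at e0
      rw [e3, e2, e1, e0, hrun (k0 - 1) (by omega)]
    refine ⟨k0 + 3, fun v hv => ?_⟩
    obtain ⟨i, rfl⟩ := RDAFAux.iota_surj hcover v
    obtain ⟨j, hj8, hrj⟩ := RDAFAux.run_reduce (k0 - 1)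
    have hoff : RDAFAux.allOff (RDAFAux.crun DD (k0 + 3)) = true := by
      rw [hfin, hrj]
      exact RDAFAux.kill4 j hj8
    have hmt := hmat (k0 + 3)
    have hMi : (RDAFAux.crun DD (k0 + 3) i).m = true := (hmt i).1.1 hv
    rw [RDAFAux.allOff_forall hoff i] at hMi
    exact Bool.false_ne_true hMi
end
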